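/- Let x ∈ ℝ⁷ be a unit vector and let u, v be an orthonormal pair of vectors both orthogonal to x. Then φ(x,u,v) = 1 if and only if v = x × u. (This is the pointwise form of: a cone C in ℝ⁷ is associative if and only if its link Σ = C ∩ S⁶ is a pseudoholomorphic curve in S⁶ with respect to the almost complex structure J_x(u) = x × u.) -/

import Mathlib

open RealInnerProductSpace

noncomputable section

/-- `ℝ⁷` with the Euclidean inner product. -/
abbrev R7 := EuclideanSpace ℝ (Fin 7)

/-- The standard basis vectors `e₁, …, e₇` of `ℝ⁷` (0-indexed). -/
def stdBasis (i : Fin 7) : R7 := EuclideanSpace.single i 1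

/-- `dx_i ∧ dx_j ∧ dx_k` evaluated on the triple `(x, y, z)` (0-indexed). -/
def dx3 (i j k : Fin 7) (x y z : R7) : ℝ :=
  x i * (y j * z k - y k * z j) - x j * (y i * z k - y k * z i)
    + x k * (y i * z j - y j * z i)

/-- The associative calibration
`φ = dx₁₂₃ + dx₁₄₅ + dx₁₆₇ + dx₂₄₆ − dx₂₅₇ − dx₃₄₇ − dx₃₅₆` (0-indexed here). -/
def phi (x y z : R7) : ℝ :=
  dx3 0 1 2 x y z + dx3 0 3 4 x y z + dx3 0 5 6 x y z + dx3 1 3 5 x y z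
    - dx3 1 4 6 x y z - dx3 2 3 6 x y z - dx3 2 4 5 x y z

/-- The cross product on `ℝ⁷`: the unique vector with `⟪x × y, z⟫ = φ(x,y,z)` for all `z`. -/
def cross (x y : R7) : R7 := ∑ i, phi x y (stdBasis i) • stdBasis i

/-!
`φ(x, u, ·)` is the linear form `⟪x × u, ·⟫`, and the Lagrange identity
`‖x × y‖² = ‖x‖²‖y‖² − ⟪x, y⟫²` makes `x × u` a unit vector when `x, u` are orthonormal.
So `φ(x, u, v) = 1` is the equality case of Cauchy–Schwarz for the unit vectors `x × u` and `v`.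
-/

lemma cross_apply_eq_phi (x y : R7) (j : Fin 7) : cross x y j = phi x y (stdBasis j) := by
  simp [cross, stdBasis, Pi.single_apply]

lemma real_inner_eq_sum {ι : Type*} [Fintype ι] (a b : EuclideanSpace ℝ ι) : ⟪a, b⟫ = ∑ i, a i * b i := by
  simp [PiLp.inner_apply, mul_comm]

lemma phi_eq_inner_cross (x y z : R7) : phi x y z = ⟪cross x y, z⟫ := by
  simp only [real_inner_eq_sum, Fin.sum_univ_seven, cross_apply_eq_phi, phi, dx3, stdBasis,
    PiLp.single_apply, Fin.reduceEq, if_true, if_false]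
  ring

lemma norm_cross_sq (x y : R7) : ‖cross x y‖ ^ 2 = ‖x‖ ^ 2 * ‖y‖ ^ 2 - ⟪x, y⟫ ^ 2 := by
  simp only [← real_inner_self_eq_norm_sq, real_inner_eq_sum, Fin.sum_univ_seven,
    cross_apply_eq_phi, phi, dx3, stdBasis, PiLp.single_apply, Fin.reduceEq, if_true, if_false]
  ring

lemma norm_cross_of_inner_eq_zero {x y : R7} (h : ⟪x, y⟫ = 0) : ‖cross x y‖ = ‖x‖ * ‖y‖ := by
  have hsq : ‖cross x y‖ ^ 2 = (‖x‖ * ‖y‖) ^ 2 := by rw [norm_cross_sq, h]; ring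
  exact (pow_left_inj₀ (norm_nonneg _) (by positivity) two_ne_zero).mp hsq

theorem associative_cone_iff_pseudoholomorphic_general (x u v : R7)
    (hx : ‖x‖ = 1) (hu : ‖u‖ = 1) (hv : ‖v‖ = 1)
    (hxu : ⟪x, u⟫ = 0) :
    phi x u v = 1 ↔ v = cross x u := by
  have hcross : ‖cross x u‖ = 1 := by rw [norm_cross_of_inner_eq_zero hxu, hx, hu, one_mul]
  rw [phi_eq_inner_cross, inner_eq_one_iff_of_norm_eq_one hcross hv, eq_comm]

/-- For a unit vector `x ∈ ℝ⁷` and an orthonormal pair `u, v` both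
orthogonal to `x`: `φ(x,u,v) = 1` if and only if `v = x × u` (pointwise form of: a cone
is associative iff its link is a pseudoholomorphic curve in `S⁶`). -/
theorem associative_cone_iff_pseudoholomorphic (x u v : R7)
    (hx : ‖x‖ = 1) (hu : ‖u‖ = 1) (hv : ‖v‖ = 1) (huv : ⟪u, v⟫ = 0)
    (hxu : ⟪x, u⟫ = 0) (hxv : ⟪x, v⟫ = 0) :
    phi x u v = 1 ↔ v = cross x u :=
  associative_cone_iff_pseudoholomorphic_general x u v hx hu hv hxu
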